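/- arXiv:1808.05944 — 2 statements merged into one kernel-verified Lean document; each statement's English description precedes it below -/
import Mathlib

section
/- For all ℓ, m ∈ ℕ, the number of Motzkin words with exactly ℓ entries 0, m entries −1 and m+1 entries +1 (i.e., Motzkin paths from 0 to +1 with parameters (ℓ, m)) equals Σ_{ℓ₁+ℓ₂ = ℓ} Σ_{m₁+m₂ = m} Exc(ℓ₁, m₁)·Br(ℓ₂, m₂). (This is the coefficient form of the equation B^{(+1)} = E·B.) -/
/-- A Motzkin word is a list with entries in `{-1, 0, +1} ⊆ ℤ`. -/
def IsMotzkinWord (w : List ℤ) : Prop := ∀ x ∈ w, x = -1 ∨ x = 0 ∨ x = 1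

/-- Motzkin bridges with `ℓ` level steps, `m` down steps and `m` up steps. -/
def MotzkinBridge (l m : ℕ) : Set (List ℤ) :=
  {w | IsMotzkinWord w ∧ w.count 0 = l ∧ w.count (-1) = m ∧ w.count 1 = m}

/-- Motzkin excursions: bridges all of whose prefix sums are nonnegative. -/
def MotzkinExcursion (l m : ℕ) : Set (List ℤ) :=
  {w | w ∈ MotzkinBridge l m ∧ ∀ p : List ℤ, p <+: w → 0 ≤ p.sum}

/-- Motzkin paths from `0` to `+1` with `ℓ` level steps, `m` down steps and `m+1`
up steps. -/
def MotzkinPathUp (l m : ℕ) : Set (List ℤ) :=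
  {w | IsMotzkinWord w ∧ w.count 0 = l ∧ w.count (-1) = m ∧ w.count 1 = m + 1}

/-- The number `Br(ℓ, m)` of Motzkin bridges with parameters `(ℓ, m)`. -/
noncomputable def Br (l m : ℕ) : ℕ := Nat.card (MotzkinBridge l m)

/-- The number `Exc(ℓ, m)` of Motzkin excursions with parameters `(ℓ, m)`. -/
noncomputable def Exc (l m : ℕ) : ℕ := Nat.card (MotzkinExcursion l m)

/-- The number of Motzkin paths from `0` to `+1` with parameters `(ℓ, m)`. -/
noncomputable def BrUp (l m : ℕ) : ℕ := Nat.card (MotzkinPathUp l m)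

/-!
Cut a Motzkin path from `0` to `+1` just after its last visit to height `0`: this writes it as
`b ++ 1 :: e` with `b` a bridge and `e` an excursion. Existence only needs the up-steps to have
size at most `1`; the cut is unique because a path whose remainder `e` has nonnegative prefix
sums never returns to height `0` after it. Sorting the pairs `(e, b)` by their parameters gives
the convolution.
-/

open Finset.HasAntidiagonal

namespace List

theorem exists_eq_append_cons_one_of_le_one {w : List ℤ} (hw : ∀ x ∈ w, x ≤ 1)
    (hsum : 1 ≤ w.sum) :
    ∃ b e : List ℤ, b.sum = 0 ∧ (∀ p, p <+: e → 0 ≤ p.sum) ∧ w = b ++ 1 :: e := by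
  induction w using List.reverseRecOn with
  | nil => simp at hsum
  | append_singleton v x ih =>
    simp only [mem_append, mem_singleton] at hw
    simp only [sum_append, sum_singleton] at hsum
    by_cases hv : 1 ≤ v.sum
    · obtain ⟨b, e, hb, he, rfl⟩ := ih (fun y hy => hw y (Or.inl hy)) hv
      refine ⟨b, e ++ [x], hb, fun p hp => ?_, by simp⟩
      rcases prefix_concat_iff.1 hp with rfl | hp
      · simp only [sum_append, sum_cons, sum_nil, hb] at hsum ⊢
        omega
      · exact he p hp
    · have hx : x = 1 := by have := hw x (Or.inr rfl); omega
      exact ⟨v, [], by omega, by simp, by simp [hx]⟩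


theorem eq_nil_of_cons_one_eq_append {e a e' : List ℤ} (he : ∀ p, p <+: e → 0 ≤ p.sum)
    (ha : a.sum ≤ 0) (h : 1 :: e = a ++ 1 :: e') : a = [] := by
  cases a with
  | nil => rfl
  | cons y t =>
    obtain ⟨rfl, rfl⟩ : 1 = y ∧ e = t ++ 1 :: e' := by simpa using h
    have := he t (prefix_append _ _)
    simp only [sum_cons] at ha
    omega

theorem eq_of_append_cons_one_eq {b e b' e' : List ℤ} (hb : b.sum = b'.sum)
    (he : ∀ p, p <+: e → 0 ≤ p.sum) (he' : ∀ p, p <+: e' → 0 ≤ p.sum)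
    (h : b ++ 1 :: e = b' ++ 1 :: e') : b = b' ∧ e = e' := by
  rcases append_eq_append_iff.1 h with ⟨a, rfl, ha⟩ | ⟨a, rfl, ha⟩
  · obtain rfl := eq_nil_of_cons_one_eq_append he (by simpa using hb.symm.le) ha
    simpa using ha
  · obtain rfl := eq_nil_of_cons_one_eq_append he' (by simpa using hb.le) ha
    simpa using ha.symm

end List

open List

namespace IsMotzkinWord

variable {w : List ℤ}

theorem perm_replicate (hw : IsMotzkinWord w) :
    w ~ replicate (w.count 0) 0 ++ replicate (w.count (-1)) (-1) ++ replicate (w.count 1) 1 := by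
  rw [perm_iff_count]
  intro a
  simp only [count_append, count_replicate, beq_iff_eq]
  by_cases ha : a = -1 ∨ a = 0 ∨ a = 1
  · rcases ha with rfl | rfl | rfl <;> simp
  · rw [count_eq_zero.2 fun h => ha (hw a h)]
    obtain ⟨h₁, h₀, h₁'⟩ := not_or.1 ha |>.imp_right not_or.1
    simp [Ne.symm h₁, Ne.symm h₀, Ne.symm h₁']

theorem sum_eq (hw : IsMotzkinWord w) : w.sum = (w.count 1 : ℤ) - w.count (-1) := by
  rw [hw.perm_replicate.sum_eq]
  simp only [sum_append, sum_replicate, nsmul_eq_mul]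
  ring

theorem mem_motzkinBridge (hw : IsMotzkinWord w) (hs : w.sum = 0) :
    w ∈ MotzkinBridge (w.count 0) (w.count (-1)) :=
  ⟨hw, rfl, rfl, by have := hw.sum_eq; omega⟩

end IsMotzkinWord

theorem isMotzkinWord_append_cons_one {b e : List ℤ} :
    IsMotzkinWord (b ++ 1 :: e) ↔ IsMotzkinWord b ∧ IsMotzkinWord e := by
  simp [IsMotzkinWord, or_imp, forall_and]

theorem finite_setOf_isMotzkinWord_count (a b c : ℕ) :
    {w | IsMotzkinWord w ∧ w.count 0 = a ∧ w.count (-1) = b ∧ w.count 1 = c}.Finite :=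
  (replicate a 0 ++ replicate b (-1) ++ replicate c 1).permutations.toFinset.finite_toSet.subset
    fun w ⟨hw, h0, h1, h2⟩ => by simpa [mem_permutations, h0, h1, h2] using hw.perm_replicate

theorem MotzkinBridge.sum_eq_zero {l m : ℕ} {w : List ℤ} (hw : w ∈ MotzkinBridge l m) :
    w.sum = 0 := by
  obtain ⟨hw, -, h1, h2⟩ := hw
  rw [hw.sum_eq, h1, h2, sub_self]

theorem motzkinBridge_finite (l m : ℕ) : (MotzkinBridge l m).Finite :=
  finite_setOf_isMotzkinWord_count l m m

theorem motzkinBridge_disjoint {l m l' m' : ℕ} (h : (l, m) ≠ (l', m')) :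
    Disjoint (MotzkinBridge l m) (MotzkinBridge l' m') :=
  Set.disjoint_left.2 fun _ ⟨_, h0, h1, _⟩ ⟨_, h0', h1', _⟩ =>
    h (Prod.ext (h0.symm.trans h0') (h1.symm.trans h1'))

def excursionBridgePairs (r : (ℕ × ℕ) × (ℕ × ℕ)) : Set (List ℤ × List ℤ) :=
  MotzkinExcursion r.1.1 r.2.1 ×ˢ MotzkinBridge r.1.2 r.2.2

theorem excursionBridgePairs_finite (r : (ℕ × ℕ) × (ℕ × ℕ)) : (excursionBridgePairs r).Finite :=
  ((motzkinBridge_finite _ _).subset fun _ h => h.1).prod (motzkinBridge_finite _ _)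

theorem pairwiseDisjoint_excursionBridgePairs :
    (Set.univ : Set ((ℕ × ℕ) × (ℕ × ℕ))).PairwiseDisjoint excursionBridgePairs := by
  rintro ⟨⟨l₁, l₂⟩, m₁, m₂⟩ - ⟨⟨l₁', l₂'⟩, m₁', m₂'⟩ - hne
  rw [Function.onFun, excursionBridgePairs, excursionBridgePairs, Set.disjoint_prod]
  by_cases h : (l₁, m₁) = (l₁', m₁')
  · right
    exact motzkinBridge_disjoint fun h' => hne (by simp_all)
  · left
    exact (motzkinBridge_disjoint h).mono (fun _ h => h.1) (fun _ h => h.1)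

def joinUp (x : List ℤ × List ℤ) : List ℤ := x.2 ++ 1 :: x.1

theorem injOn_joinUp : Set.InjOn joinUp (⋃ r, excursionBridgePairs r) := by
  rintro ⟨e, b⟩ hx ⟨e', b'⟩ hx' h
  obtain ⟨_, ⟨-, he⟩, hb⟩ := Set.mem_iUnion.1 hx
  obtain ⟨_, ⟨-, he'⟩, hb'⟩ := Set.mem_iUnion.1 hx'
  obtain ⟨rfl, rfl⟩ :=
    List.eq_of_append_cons_one_eq
      ((MotzkinBridge.sum_eq_zero hb).trans (MotzkinBridge.sum_eq_zero hb').symm) he he' h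
  rfl

theorem motzkinPathUp_eq_image_joinUp (l m : ℕ) :
    MotzkinPathUp l m =
      joinUp '' ⋃ r ∈ antidiagonal l ×ˢ antidiagonal m, excursionBridgePairs r := by
  ext w
  simp only [Set.mem_image, Set.mem_iUnion, Finset.mem_product, mem_antidiagonal, exists_prop]
  constructor
  · rintro ⟨hw, h0, h1, h2⟩
    have hsum := hw.sum_eq
    obtain ⟨b, e, hb, he, rfl⟩ := List.exists_eq_append_cons_one_of_le_one
      (fun x hx => by rcases hw x hx with h | h | h <;> omega) (by omega)
    obtain ⟨hbm, hem⟩ := isMotzkinWord_append_cons_one.1 hw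
    have hes : e.sum = 0 := by simp only [sum_append, sum_cons] at hsum; omega
    refine ⟨(e, b), ⟨((e.count 0, b.count 0), (e.count (-1), b.count (-1))), ?_,
      ⟨hem.mem_motzkinBridge hes, he⟩, hbm.mem_motzkinBridge hb⟩, rfl⟩
    simp only [count_append, ne_eq, one_ne_zero, not_false_eq_true, count_cons_of_ne,
      Int.reduceNeg, reduceCtorEq] at h0 h1
    dsimp only
    omega
  · rintro ⟨⟨e, b⟩, ⟨⟨⟨l₁, l₂⟩, m₁, m₂⟩, ⟨hl, hm⟩, ⟨⟨hem, he0, he1, he2⟩, -⟩, hbm, hb0, hb1, hb2⟩,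
      rfl⟩
    dsimp only at *
    refine ⟨isMotzkinWord_append_cons_one.2 ⟨hbm, hem⟩, ?_, ?_, ?_⟩ <;>
      simp only [joinUp, count_append, count_cons_self, ne_eq, count_cons_of_ne, one_ne_zero,
        Int.reduceNeg, reduceCtorEq, not_false_eq_true] <;>
      omega

/-- Coefficient form of `B^{(+1)} = E·B`: Motzkin paths from `0` to `+1` decompose as an
excursion followed by a bridge. -/
theorem pathUp_eq_exc_mul_bridge (l m : ℕ) :
    BrUp l m =
      ∑ p ∈ Finset.HasAntidiagonal.antidiagonal l, ∑ q ∈ Finset.HasAntidiagonal.antidiagonal m,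
        Exc p.1 q.1 * Br p.2 q.2 := by
  calc BrUp l m = (MotzkinPathUp l m).ncard := Nat.card_coe_set_eq _
    _ = (⋃ r ∈ antidiagonal l ×ˢ antidiagonal m, excursionBridgePairs r).ncard := by
      rw [motzkinPathUp_eq_image_joinUp,
        (injOn_joinUp.mono (Set.iUnion₂_subset_iUnion _ _)).ncard_image]
    _ = ∑ r ∈ antidiagonal l ×ˢ antidiagonal m, (excursionBridgePairs r).ncard := by
      rw [← finsum_mem_coe_finset]
      exact (Finset.finite_toSet _).ncard_biUnion (fun r _ => excursionBridgePairs_finite r)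
        (pairwiseDisjoint_excursionBridgePairs.subset (Set.subset_univ _))
    _ = _ := by
      simp only [Finset.sum_product, excursionBridgePairs, Set.ncard_prod, Exc, Br,
        Nat.card_coe_set_eq]
end

section
/- Let L, R be real numbers with 0 < L < 1, R > 0 and (1−L)² = 4R (equivalently 2L − L² + 4R = 1). Then the family (ℓ, m) ∈ ℕ×ℕ ↦ m·B_{ℓ,m}·L^ℓ·R^m is not summable. -/
/-!
For fixed `m`, the generating series `∑_ℓ B_{ℓ,m} L^ℓ` is `centralBinom m / (1 - L)^(2m+1)`.
At the critical point `R^m = (1 - L)^(2m) / 4^m`, so the `m`-th fibre of the family sums to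
`m · centralBinom m / (4^m (1 - L))`, which exceeds `1 / (1 - L)` once `m ≥ 4` since
`4^m < m · centralBinom m`. Fibre sums of a summable family tend to zero, a contradiction.
-/

/-- The Motzkin-bridge trinomial coefficient `B_{ℓ,m} = (ℓ+2m)! / (ℓ!·m!·m!)`. -/
def Bcoef (l m : ℕ) : ℕ :=
  (l + 2 * m).factorial / (l.factorial * m.factorial * m.factorial)

open Filter Topology

theorem Bcoef_eq_choose_mul_centralBinom (l m : ℕ) :
    Bcoef l m = (l + 2 * m).choose (2 * m) * m.centralBinom := by
  have h_outer := Nat.choose_mul_factorial_mul_factorial (Nat.le_add_left (2 * m) l)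
  have h_inner := Nat.choose_mul_factorial_mul_factorial (show m ≤ 2 * m by omega)
  rw [Nat.add_sub_cancel] at h_outer
  rw [show 2 * m - m = m by omega, ← Nat.centralBinom_eq_two_mul_choose] at h_inner
  have h_factorial : (l + 2 * m).factorial = (l + 2 * m).choose (2 * m) * m.centralBinom
      * (l.factorial * m.factorial * m.factorial) := by
    rw [← h_outer, ← h_inner]; ring
  rw [Bcoef, h_factorial, Nat.mul_div_cancel _ (by positivity)]

theorem hasSum_Bcoef_mul_geometric {𝕜 : Type*} [NormedField 𝕜] [HasSummableGeomSeries 𝕜]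
    (m : ℕ) {x : 𝕜} (hx : ‖x‖ < 1) :
    HasSum (fun l ↦ (Bcoef l m : 𝕜) * x ^ l) (m.centralBinom / (1 - x) ^ (2 * m + 1)) := by
  have h := (hasSum_choose_mul_geometric_of_norm_lt_one (2 * m) hx).mul_left
    (m.centralBinom : 𝕜)
  rw [mul_one_div] at h
  refine h.congr_fun fun l ↦ ?_
  rw [Bcoef_eq_choose_mul_centralBinom]
  push_cast
  ring

theorem hasSum_mul_Bcoef_mul_pow_of_sq_eq (m : ℕ) {L R : ℝ} (hL : |L| < 1)
    (hcrit : (1 - L) ^ 2 = 4 * R) :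
    HasSum (fun l ↦ (m : ℝ) * Bcoef l m * L ^ l * R ^ m)
      (m * m.centralBinom / (4 ^ m * (1 - L))) := by
  have hR_pow : R ^ m = (1 - L) ^ (2 * m) / 4 ^ m := by
    rw [pow_mul, hcrit, mul_pow, mul_div_cancel_left₀ _ (by positivity)]
  have h_value : (m : ℝ) * m.centralBinom / (4 ^ m * (1 - L))
      = m * R ^ m * (m.centralBinom / (1 - L) ^ (2 * m + 1)) := by
    have : 1 - L ≠ 0 := by linarith [abs_lt.1 hL]
    rw [hR_pow, pow_succ]
    field_simp
  rw [h_value]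
  have hL_norm : ‖L‖ < 1 := by rwa [Real.norm_eq_abs]
  refine ((hasSum_Bcoef_mul_geometric m hL_norm).mul_left _).congr_fun fun l ↦ ?_
  ring

theorem one_div_lt_mul_centralBinom_div {u : ℝ} (hu : 0 < u) {m : ℕ} (hm : 4 ≤ m) :
    1 / u < m * m.centralBinom / (4 ^ m * u) := by
  have h4 : (4 : ℝ) ^ m < m * m.centralBinom := by
    exact_mod_cast Nat.four_pow_lt_mul_centralBinom m hm
  rw [div_lt_div_iff₀ hu (by positivity)]
  nlinarith

theorem not_summable_at_critical_point_general (L R : ℝ) (hL0 : 0 < L) (hL1 : L < 1)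
    (hcrit : (1 - L) ^ 2 = 4 * R) :
    ¬ Summable (fun p : ℕ × ℕ => (p.2 : ℝ) * (Bcoef p.1 p.2 : ℝ) * L ^ p.1 * R ^ p.2) := by
  intro h
  have hu : 0 < 1 - L := by linarith
  have hL : |L| < 1 := abs_lt.2 ⟨by linarith, hL1⟩
  have h_fibres : Tendsto (fun m : ℕ ↦ m * m.centralBinom / (4 ^ m * (1 - L))) atTop (𝓝 0) := by
    simpa [(hasSum_mul_Bcoef_mul_pow_of_sq_eq _ hL hcrit).tsum_eq]
      using h.prod_symm.prod.tendsto_atTop_zero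
  have h_bound : 1 / (1 - L) ≤ 0 :=
    ge_of_tendsto h_fibres <| (eventually_ge_atTop 4).mono fun m hm ↦
      (one_div_lt_mul_centralBinom_div hu hm).le
  exact (one_div_pos.2 hu).not_ge h_bound

/-- At the critical point `(1−L)² = 4R` (with `0 < L < 1`, `R > 0`), the family
`m·B_{ℓ,m}·L^ℓ·R^m` is not summable. -/
theorem not_summable_at_critical_point (L R : ℝ) (hL0 : 0 < L) (hL1 : L < 1)
    (hR : 0 < R) (hcrit : (1 - L) ^ 2 = 4 * R) :
    ¬ Summable (fun p : ℕ × ℕ => (p.2 : ℝ) * (Bcoef p.1 p.2 : ℝ) * L ^ p.1 * R ^ p.2) :=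
  not_summable_at_critical_point_general L R hL0 hL1 hcrit
end
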